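/- arXiv:1706.02939 — 7 statements merged into one kernel-verified Lean document; each statement's English description precedes it below -/
import Mathlib

section
/- Let O be a nonempty set of obstacles in ℝ² and let γ : [0,1] → ℝ² be a continuously differentiable path such that clr(γ(t)) > 0 for all t ∈ [0,1]. If clr(γ(0)) ≤ clr(γ(1)), then the cost of γ satisfies μ(γ) = ∫₀¹ ‖γ'(t)‖ / clr(γ(t)) dt ≥ log( clr(γ(1)) / clr(γ(0)) ). -/
/-! Since `infDist · O` is 1-Lipschitz and `log y - log x ≤ (y - x) / x`, the upper right Dini
derivative of `log (clr (γ t))` is at most `‖γ' t‖ / clr (γ t)`. A continuous function whose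
upper right Dini derivative is bounded by a continuous `g` grows by at most `∫ g`, by comparison
with the primitive of `g`. -/

open Real Set Metric

open Filter Topology

theorem log_sub_log_le_sub_div {x y : ℝ} (hx : 0 < x) (hy : 0 < y) :
    log y - log x ≤ (y - x) / x :=
  calc log y - log x = log (y / x) := (log_div hy.ne' hx.ne').symm
    _ ≤ y / x - 1 := log_le_sub_one_of_pos (div_pos hy hx)
    _ = (y - x) / x := by field_simp

theorem log_infDist_sub_log_infDist_le {α : Type*} [PseudoMetricSpace α] {s : Set α} {x y : α}
    (hx : 0 < infDist x s) (hy : 0 < infDist y s) :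
    log (infDist y s) - log (infDist x s) ≤ dist y x / infDist x s := by
  have hlip : infDist y s - infDist x s ≤ dist y x := by
    linarith [infDist_le_infDist_add_dist (x := y) (y := x) (s := s)]
  exact (log_sub_log_le_sub_div hx hy).trans (div_le_div_of_nonneg_right hlip hx.le)

theorem frequently_slope_lt_of_sub_le_mul_norm_sub {E : Type*} [NormedAddCommGroup E]
    [NormedSpace ℝ E] {φ : ℝ → ℝ} {γ : ℝ → E} {v : E} {x c r : ℝ}
    (hγ : HasDerivWithinAt γ v (Ioi x) x) (hφ : ∀ᶠ z in 𝓝[>] x, φ z - φ x ≤ c * ‖γ z - γ x‖)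
    (hr : c * ‖v‖ < r) :
    ∃ᶠ z in 𝓝[>] x, slope φ x z < r := by
  have hslope : Tendsto (fun z => c * ‖slope γ x z‖) (𝓝[>] x) (𝓝 (c * ‖v‖)) :=
    (((hasDerivWithinAt_iff_tendsto_slope' fun h => lt_irrefl x h).1 hγ).norm).const_mul c
  refine Eventually.frequently ?_
  filter_upwards [hφ, hslope.eventually (gt_mem_nhds hr), self_mem_nhdsWithin]
    with z hφz hlt (hxz : x < z)
  have hzx : 0 < z - x := sub_pos.2 hxz
  have hnorm : ‖slope γ x z‖ = ‖γ z - γ x‖ / (z - x) := by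
    rw [slope_def_module, norm_smul, norm_inv, norm_of_nonneg hzx.le, inv_mul_eq_div]
  calc slope φ x z = (φ z - φ x) / (z - x) := slope_def_field φ x z
    _ ≤ c * ‖γ z - γ x‖ / (z - x) := div_le_div_of_nonneg_right hφz hzx.le
    _ = c * ‖slope γ x z‖ := by rw [hnorm, mul_div_assoc]
    _ < r := hlt

theorem hasDerivWithinAt_integral_Ici_of_continuousOn {E : Type*} [NormedAddCommGroup E]
    [NormedSpace ℝ E] [CompleteSpace E] {g : ℝ → E} {a b x : ℝ}
    (hg : ContinuousOn g (Icc a b)) (hx : x ∈ Ico a b) :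
    HasDerivWithinAt (fun t => ∫ u in a..t, g u) (g x) (Ici x) x := by
  have hIcc : Icc a b ∈ 𝓝[>] x := Icc_mem_nhdsGT_of_mem hx
  have hint : IntervalIntegrable g MeasureTheory.volume a x :=
    (hg.mono (Icc_subset_Icc le_rfl hx.2.le)).intervalIntegrable_of_Icc hx.1
  exact intervalIntegral.integral_hasDerivWithinAt_right hint
    ⟨Icc a b, hIcc, hg.aestronglyMeasurable measurableSet_Icc⟩
    ((hg x (Ico_subset_Icc_self hx)).mono_of_mem_nhdsWithin hIcc)

theorem sub_le_integral_of_frequently_slope_lt {φ g : ℝ → ℝ} {a b : ℝ} (hab : a ≤ b)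
    (hφ : ContinuousOn φ (Icc a b)) (hg : ContinuousOn g (Icc a b))
    (bound : ∀ x ∈ Ico a b, ∀ r, g x < r → ∃ᶠ z in 𝓝[>] x, slope φ x z < r) :
    φ b - φ a ≤ ∫ x in a..b, g x := by
  have hprim : ContinuousOn (fun t => ∫ u in a..t, g u) (Icc a b) := by
    simpa only [uIcc_of_le hab] using
      intervalIntegral.continuousOn_primitive_interval (a := a) (b := b)
        (by simpa only [uIcc_of_le hab] using hg.integrableOn_Icc)
  have := image_le_of_liminf_slope_right_le_deriv_boundary hφ
    (B := fun t => φ a + ∫ u in a..t, g u) (by simp) (continuousOn_const.add hprim)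
    (fun x hx => (hasDerivWithinAt_integral_Ici_of_continuousOn hg hx).const_add _) bound
    (right_mem_Icc.2 hab)
  linarith

theorem log_infDist_sub_log_infDist_le_integral {E : Type*} [NormedAddCommGroup E]
    [NormedSpace ℝ E] {s : Set E} {γ : ℝ → E} {a b : ℝ} (hab : a < b)
    (hγ : ContDiffOn ℝ 1 γ (Icc a b)) (hpos : ∀ t ∈ Icc a b, 0 < infDist (γ t) s) :
    log (infDist (γ b) s) - log (infDist (γ a) s) ≤
      ∫ t in a..b, ‖derivWithin γ (Icc a b) t‖ / infDist (γ t) s := by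
  have hne : ∀ t ∈ Icc a b, infDist (γ t) s ≠ 0 := fun t ht => (hpos t ht).ne'
  have hclr : ContinuousOn (fun t => infDist (γ t) s) (Icc a b) :=
    (continuous_infDist_pt s).comp_continuousOn hγ.continuousOn
  have hγ' : ContinuousOn (derivWithin γ (Icc a b)) (Icc a b) :=
    hγ.continuousOn_derivWithin (uniqueDiffOn_Icc hab) le_rfl
  refine sub_le_integral_of_frequently_slope_lt hab.le (hclr.log hne) (hγ'.norm.div hclr hne)
    fun x hx r hr => ?_
  have hIcc : Icc a b ∈ 𝓝[>] x := Icc_mem_nhdsGT_of_mem hx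
  have hx' : x ∈ Icc a b := Ico_subset_Icc_self hx
  refine frequently_slope_lt_of_sub_le_mul_norm_sub (c := (infDist (γ x) s)⁻¹)
    ((hγ.differentiableOn one_ne_zero x hx').hasDerivWithinAt.mono_of_mem_nhdsWithin hIcc)
    ?_ (by rwa [inv_mul_eq_div])
  filter_upwards [hIcc] with z hz
  rw [inv_mul_eq_div, ← dist_eq_norm]
  exact log_infDist_sub_log_infDist_le (hpos x hx') (hpos z hz)

theorem cost_ge_log_clearance_ratio_general
    (O : Set (EuclideanSpace ℝ (Fin 2)))
    (γ : ℝ → EuclideanSpace ℝ (Fin 2))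
    (hγ : ContDiffOn ℝ 1 γ (Icc 0 1))
    (hclr : ∀ t ∈ Icc (0:ℝ) 1, 0 < infDist (γ t) O) :
    Real.log (infDist (γ 1) O / infDist (γ 0) O) ≤
      ∫ t in (0:ℝ)..1, ‖derivWithin γ (Icc 0 1) t‖ / infDist (γ t) O := by
  rw [log_div (hclr 1 (right_mem_Icc.2 zero_le_one)).ne' (hclr 0 (left_mem_Icc.2 zero_le_one)).ne']
  exact log_infDist_sub_log_infDist_le_integral zero_lt_one hγ hclr

/-- Lemma 2.1(i): the cost of any C¹ path is at least the log of the
clearance ratio of its endpoints. -/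
theorem cost_ge_log_clearance_ratio
    (O : Set (EuclideanSpace ℝ (Fin 2))) (hO : O.Nonempty)
    (γ : ℝ → EuclideanSpace ℝ (Fin 2))
    (hγ : ContDiffOn ℝ 1 γ (Icc 0 1))
    (hclr : ∀ t ∈ Icc (0:ℝ) 1, 0 < infDist (γ t) O)
    (hends : infDist (γ 0) O ≤ infDist (γ 1) O) :
    Real.log (infDist (γ 1) O / infDist (γ 0) O) ≤
      ∫ t in (0:ℝ)..1, ‖derivWithin γ (Icc 0 1) t‖ / infDist (γ t) O :=
  cost_ge_log_clearance_ratio_general O γ hγ hclr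
end

section
/- Let O be a nonempty set of obstacles in ℝ² and let γ : [0,1] → ℝ² be a continuously differentiable path such that clr(γ(t)) > 0 for all t ∈ [0,1], with total cost d = μ(γ) = ∫₀¹ ‖γ'(t)‖ / clr(γ(t)) dt. Then for every t₀ ∈ [0,1], clr(γ(0)) · exp(−d) ≤ clr(γ(t₀)) ≤ clr(γ(0)) · exp(d). -/
open Real Set Metric Filter Topology

/-!
The clearance is 1-Lipschitz and `|log b - log a| ≤ |b - a| / min a b`, so along the path
`log clr(γ t)` has right Dini derivative of absolute value at most `‖γ' t‖ / clr(γ t)`.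
A Dini-derivative comparison with the primitive of this density gives
`|log clr(γ t₀) - log clr(γ 0)| ≤ μ(γ)`, and exponentiating yields both bounds.
-/

theorem Real.log_sub_log_le_sub_div {a b : ℝ} (ha : 0 < a) (hb : 0 < b) :
    log b - log a ≤ (b - a) / a := by
  rw [← log_div hb.ne' ha.ne', sub_div, div_self ha.ne']
  exact log_le_sub_one_of_pos (div_pos hb ha)

theorem Real.abs_log_sub_log_le {a b : ℝ} (ha : 0 < a) (hb : 0 < b) :
    |log b - log a| ≤ |b - a| / min a b := by
  have hmin : 0 < min a b := lt_min ha hb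
  rw [abs_sub_le_iff]
  constructor
  · calc log b - log a ≤ (b - a) / a := log_sub_log_le_sub_div ha hb
      _ ≤ |b - a| / min a b := div_le_div₀ (abs_nonneg _) (le_abs_self _) hmin (min_le_left _ _)
  · calc log a - log b ≤ (a - b) / b := log_sub_log_le_sub_div hb ha
      _ ≤ |b - a| / min a b :=
        div_le_div₀ (abs_nonneg _) (abs_sub_comm b a ▸ le_abs_self _) hmin (min_le_right _ _)

theorem Real.mul_exp_neg_le_and_le_mul_exp_of_abs_log_sub_le {x y d : ℝ} (hx : 0 < x)
    (hy : 0 < y) (h : |log y - log x| ≤ d) : x * exp (-d) ≤ y ∧ y ≤ x * exp d := by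
  rw [abs_sub_le_iff] at h
  constructor
  · calc x * exp (-d) = exp (log x - d) := by rw [exp_sub, exp_log hx, exp_neg, div_eq_mul_inv]
      _ ≤ exp (log y) := exp_le_exp.2 (by linarith)
      _ = y := exp_log hy
  · calc y = exp (log y) := (exp_log hy).symm
      _ ≤ exp (log x + d) := exp_le_exp.2 (by linarith)
      _ = x * exp d := by rw [exp_add, exp_log hx]

section

variable {E : Type*} [NormedAddCommGroup E] [NormedSpace ℝ E]

theorem HasDerivWithinAt.tendsto_norm_sub_div_nhdsGT {f : ℝ → E} {f' : E} {x : ℝ}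
    (h : HasDerivWithinAt f f' (Ioi x) x) :
    Tendsto (fun z => ‖f z - f x‖ / (z - x)) (𝓝[>] x) (𝓝 ‖f'‖) := by
  refine ((hasDerivWithinAt_iff_tendsto_slope' (lt_irrefl x)).1 h).norm.congr' ?_
  filter_upwards [self_mem_nhdsWithin] with z (hz : x < z)
  rw [slope_def_module, norm_smul, norm_inv, norm_of_nonneg (sub_pos.2 hz).le, inv_mul_eq_div]

theorem ContinuousOn.hasDerivWithinAt_integral_Icc [CompleteSpace E] {f : ℝ → E} {a b x : ℝ}
    (hf : ContinuousOn f (Icc a b)) (hx : x ∈ Icc a b) :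
    HasDerivWithinAt (fun u => ∫ s in a..u, f s) (f x) (Icc a b) x := by
  have := Fact.mk hx
  exact intervalIntegral.integral_hasDerivWithinAt_right
    ((hf.mono (Icc_subset_Icc le_rfl hx.2)).intervalIntegrable_of_Icc hx.1)
    (hf.stronglyMeasurableAtFilter_nhdsWithin measurableSet_Icc x) (hf x hx)

theorem abs_sub_le_integral_of_eventually_abs_sub_lt {F c : ℝ → ℝ} {a b : ℝ}
    (hF : ContinuousOn F (Icc a b)) (hc : ContinuousOn c (Icc a b))
    (hslope : ∀ x ∈ Ico a b, ∀ r > c x, ∀ᶠ z in 𝓝[>] x, |F z - F x| < r * (z - x))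
    {t : ℝ} (ht : t ∈ Icc a b) :
    |F t - F a| ≤ ∫ s in a..t, c s := by
  have hB := fun x (hx : x ∈ Icc a b) => hc.hasDerivWithinAt_integral_Icc hx
  refine image_le_of_liminf_slope_right_le_deriv_boundary (f := fun t => |F t - F a|)
    (hF.sub continuousOn_const).abs (by simp) (fun x hx => (hB x hx).continuousWithinAt)
    (fun x hx => (hB x (Ico_subset_Icc_self hx)).mono_of_mem_nhdsWithin
      (Icc_mem_nhdsGE_of_mem hx)) (fun x hx r hr => ?_) ht
  refine Eventually.frequently ?_
  filter_upwards [hslope x hx r hr, self_mem_nhdsWithin] with z hz (hxz : x < z)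
  rw [slope_def_field, div_lt_iff₀ (sub_pos.2 hxz)]
  calc |F z - F a| - |F x - F a| ≤ |F z - F x| := by
        simpa using abs_sub_abs_le_abs_sub (F z - F a) (F x - F a)
    _ < r * (z - x) := hz

variable {φ : E → ℝ} {K : NNReal}

theorem LipschitzWith.eventually_abs_log_comp_sub_lt (hφ : LipschitzWith K φ) {γ : ℝ → E}
    {γ' : E} {x r : ℝ} (hγ : HasDerivWithinAt γ γ' (Ioi x) x) (hx : 0 < φ (γ x))
    (hr : K * ‖γ'‖ / φ (γ x) < r) :
    ∀ᶠ z in 𝓝[>] x, |log (φ (γ z)) - log (φ (γ x))| < r * (z - x) := by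
  have hcont : Tendsto (fun z => φ (γ z)) (𝓝[>] x) (𝓝 (φ (γ x))) :=
    (hφ.continuous.continuousAt.comp_continuousWithinAt hγ.continuousWithinAt).tendsto
  have hmin : Tendsto (fun z => min (φ (γ x)) (φ (γ z))) (𝓝[>] x) (𝓝 (φ (γ x))) := by
    simpa using (tendsto_const_nhds (x := φ (γ x))).min hcont
  have hrate : ∀ᶠ z in 𝓝[>] x, K * (‖γ z - γ x‖ / (z - x)) / min (φ (γ x)) (φ (γ z)) < r :=
    ((hγ.tendsto_norm_sub_div_nhdsGT.const_mul _).div hmin hx.ne').eventually_lt_const hr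
  filter_upwards [hrate, hcont.eventually_const_lt hx, self_mem_nhdsWithin]
    with z hz hzpos (hxz : x < z)
  have hxz' : 0 < z - x := sub_pos.2 hxz
  calc |log (φ (γ z)) - log (φ (γ x))|
      ≤ |φ (γ z) - φ (γ x)| / min (φ (γ x)) (φ (γ z)) := abs_log_sub_log_le hx hzpos
    _ ≤ K * ‖γ z - γ x‖ / min (φ (γ x)) (φ (γ z)) := by
      gcongr
      simpa [Real.dist_eq, dist_eq_norm] using hφ.dist_le_mul (γ z) (γ x)
    _ = K * (‖γ z - γ x‖ / (z - x)) / min (φ (γ x)) (φ (γ z)) * (z - x) := by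
      field_simp
    _ < r * (z - x) := mul_lt_mul_of_pos_right hz hxz'

theorem LipschitzWith.abs_log_comp_sub_le_integral (hφ : LipschitzWith K φ) {γ : ℝ → E}
    {a b : ℝ} (hab : a < b) (hγ : ContDiffOn ℝ 1 γ (Icc a b))
    (hpos : ∀ t ∈ Icc a b, 0 < φ (γ t)) {t : ℝ} (ht : t ∈ Icc a b) :
    |log (φ (γ t)) - log (φ (γ a))| ≤
      ∫ s in a..b, K * ‖derivWithin γ (Icc a b) s‖ / φ (γ s) := by
  have hρ : ContinuousOn (fun s => φ (γ s)) (Icc a b) :=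
    hφ.continuous.comp_continuousOn hγ.continuousOn
  have hcost : ContinuousOn (fun s => K * ‖derivWithin γ (Icc a b) s‖ / φ (γ s)) (Icc a b) :=
    (continuousOn_const.mul (hγ.continuousOn_derivWithin (uniqueDiffOn_Icc hab) le_rfl).norm).div
      hρ fun s hs => (hpos s hs).ne'
  have hlocal (x : ℝ) (hx : x ∈ Ico a b) (r : ℝ)
      (hr : r > K * ‖derivWithin γ (Icc a b) x‖ / φ (γ x)) :
      ∀ᶠ z in 𝓝[>] x, |log (φ (γ z)) - log (φ (γ x))| < r * (z - x) :=
    hφ.eventually_abs_log_comp_sub_lt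
      ((hγ.differentiableOn one_ne_zero x (Ico_subset_Icc_self hx)).hasDerivWithinAt
        |>.mono_of_mem_nhdsWithin (Icc_mem_nhdsGT_of_mem hx))
      (hpos x (Ico_subset_Icc_self hx)) hr
  calc |log (φ (γ t)) - log (φ (γ a))|
      ≤ ∫ s in a..t, K * ‖derivWithin γ (Icc a b) s‖ / φ (γ s) :=
        abs_sub_le_integral_of_eventually_abs_sub_lt (hρ.log fun s hs => (hpos s hs).ne') hcost
          hlocal ht
    _ ≤ ∫ s in a..b, K * ‖derivWithin γ (Icc a b) s‖ / φ (γ s) := by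
      refine intervalIntegral.integral_mono_interval le_rfl ht.1 ht.2 ?_
        (hcost.intervalIntegrable_of_Icc hab.le)
      filter_upwards [MeasureTheory.ae_restrict_mem measurableSet_Ioc] with s hs
      exact div_nonneg (by positivity) (hpos s (Ioc_subset_Icc_self hs)).le

end

theorem clearance_bounds_along_path_general
    (O : Set (EuclideanSpace ℝ (Fin 2)))
    (γ : ℝ → EuclideanSpace ℝ (Fin 2))
    (hγ : ContDiffOn ℝ 1 γ (Icc 0 1))
    (hclr : ∀ t ∈ Icc (0:ℝ) 1, 0 < infDist (γ t) O)
    (d : ℝ)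
    (hd : d = ∫ t in (0:ℝ)..1, ‖derivWithin γ (Icc 0 1) t‖ / infDist (γ t) O)
    (t₀ : ℝ) (ht₀ : t₀ ∈ Icc (0:ℝ) 1) :
    infDist (γ 0) O * Real.exp (-d) ≤ infDist (γ t₀) O ∧
      infDist (γ t₀) O ≤ infDist (γ 0) O * Real.exp d := by
  have hlog := (lipschitz_infDist_pt O).abs_log_comp_sub_le_integral zero_lt_one hγ hclr ht₀
  simp only [NNReal.coe_one, one_mul, ← hd] at hlog
  exact mul_exp_neg_le_and_le_mul_exp_of_abs_log_sub_le (hclr 0 (left_mem_Icc.2 zero_le_one))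
    (hclr t₀ ht₀) hlog

/-- Key claim in Lemma 4.3: every point of a path of total cost `d` has clearance
within a factor `exp d` of the clearance of the starting point. -/
theorem clearance_bounds_along_path
    (O : Set (EuclideanSpace ℝ (Fin 2))) (hO : O.Nonempty)
    (γ : ℝ → EuclideanSpace ℝ (Fin 2))
    (hγ : ContDiffOn ℝ 1 γ (Icc 0 1))
    (hclr : ∀ t ∈ Icc (0:ℝ) 1, 0 < infDist (γ t) O)
    (d : ℝ)
    (hd : d = ∫ t in (0:ℝ)..1, ‖derivWithin γ (Icc 0 1) t‖ / infDist (γ t) O)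
    (t₀ : ℝ) (ht₀ : t₀ ∈ Icc (0:ℝ) 1) :
    infDist (γ 0) O * Real.exp (-d) ≤ infDist (γ t₀) O ∧
      infDist (γ t₀) O ≤ infDist (γ 0) O * Real.exp d :=
  clearance_bounds_along_path_general O γ hγ hclr d hd t₀ ht₀
end

section
/- Let r : [0,1] → ℝ and θ : [0,1] → ℝ be continuously differentiable with r(t) > 0 for all t ∈ [0,1], and define γ : [0,1] → ℝ² by γ(t) = (r(t)·cos θ(t), r(t)·sin θ(t)). Then ∫₀¹ ‖γ'(t)‖ / ‖γ(t)‖ dt = ∫₀¹ √( θ'(t)² + (r'(t)/r(t))² ) dt; in other words, the cost of γ with respect to the point obstacle {0} equals the Euclidean arc length of the transformed path t ↦ (θ(t), log r(t)). -/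
open Real Set

/-!
The velocity of `t ↦ r t • (cos θ t, sin θ t)` is the vector `(r', r θ')` rotated by `θ`, so
`‖γ'‖ = √(r'² + (r θ')²)` while `‖γ‖ = r`; dividing by `r > 0` turns the cost integrand into
`√(θ'² + (r'/r)²)` pointwise on `[0, 1]`.
-/

theorem EuclideanSpace.norm_rotate (a b φ : ℝ) :
    ‖!₂[a * cos φ - b * sin φ, a * sin φ + b * cos φ]‖ = √(a ^ 2 + b ^ 2) := by
  rw [EuclideanSpace.norm_eq]
  congr 1
  simp only [Fin.sum_univ_two, Matrix.cons_val_zero, Matrix.cons_val_one, Real.norm_eq_abs, sq_abs]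
  linear_combination (a ^ 2 + b ^ 2) * sin_sq_add_cos_sq φ

theorem EuclideanSpace.norm_polar (ρ φ : ℝ) : ‖!₂[ρ * cos φ, ρ * sin φ]‖ = |ρ| := by
  simpa [sqrt_sq_eq_abs] using norm_rotate ρ 0 φ

theorem hasDerivWithinAt_polar {r θ : ℝ → ℝ} {r' θ' : ℝ} {s : Set ℝ} {t : ℝ}
    (hr : HasDerivWithinAt r r' s t) (hθ : HasDerivWithinAt θ θ' s t) :
    HasDerivWithinAt (fun t ↦ !₂[r t * cos (θ t), r t * sin (θ t)])
      !₂[r' * cos (θ t) - r t * θ' * sin (θ t), r' * sin (θ t) + r t * θ' * cos (θ t)] s t := by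
  have hcoords : HasDerivWithinAt (fun t ↦ ![r t * cos (θ t), r t * sin (θ t)])
      ![r' * cos (θ t) - r t * θ' * sin (θ t), r' * sin (θ t) + r t * θ' * cos (θ t)] s t := by
    refine hasDerivWithinAt_pi.2 (Fin.forall_fin_two.2 ⟨?_, ?_⟩)
    · exact (hr.mul hθ.cos).congr_deriv (by simp only [Matrix.cons_val_zero]; ring)
    · exact (hr.mul hθ.sin).congr_deriv
        (by simp only [Matrix.cons_val_one, Matrix.cons_val_zero]; ring)
  exact (PiLp.hasFDerivAt_toLp 2 _).comp_hasDerivWithinAt t hcoords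

theorem Real.sqrt_sq_add_mul_sq_div_abs {a b ρ : ℝ} (hρ : ρ ≠ 0) :
    √(a ^ 2 + (ρ * b) ^ 2) / |ρ| = √(b ^ 2 + (a / ρ) ^ 2) := by
  rw [← sqrt_sq_eq_abs, ← sqrt_div' _ (sq_nonneg ρ)]
  congr 1
  field_simp
  ring

/-- The transformed-plane identity behind property (P1): the cost of a path in polar
form `(r, θ)` around the point obstacle `0` equals the Euclidean arc length of the
transformed path `t ↦ (θ t, log (r t))`. -/
theorem polar_cost_eq_transformed_length
    (r θ : ℝ → ℝ)
    (hr : ContDiffOn ℝ 1 r (Icc 0 1)) (hθ : ContDiffOn ℝ 1 θ (Icc 0 1))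
    (hrpos : ∀ t ∈ Icc (0:ℝ) 1, 0 < r t)
    (γ : ℝ → EuclideanSpace ℝ (Fin 2))
    (hγ : ∀ t, γ t = ![r t * Real.cos (θ t), r t * Real.sin (θ t)]) :
    ∫ t in (0:ℝ)..1, ‖derivWithin γ (Icc 0 1) t‖ / ‖γ t‖ =
      ∫ t in (0:ℝ)..1,
        Real.sqrt ((derivWithin θ (Icc 0 1) t) ^ 2 +
          (derivWithin r (Icc 0 1) t / r t) ^ 2) := by
  obtain rfl : γ = fun t ↦ !₂[r t * cos (θ t), r t * sin (θ t)] :=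
    funext fun t ↦ congrArg (WithLp.toLp 2) (hγ t)
  refine intervalIntegral.integral_congr fun t ht ↦ ?_
  rw [uIcc_of_le zero_le_one] at ht
  have hderiv := (hasDerivWithinAt_polar (hr.differentiableOn one_ne_zero t ht).hasDerivWithinAt
    (hθ.differentiableOn one_ne_zero t ht).hasDerivWithinAt).derivWithin
    (uniqueDiffOn_Icc zero_lt_one t ht)
  rw [hderiv, EuclideanSpace.norm_rotate, EuclideanSpace.norm_polar]
  exact Real.sqrt_sq_add_mul_sq_div_abs (hrpos t ht).ne'
end

section
/- Let r_s, r_t > 0 and θ_s, θ_t ∈ ℝ. Define the logarithmic spiral γ : [0,1] → ℝ² by γ(t) = exp((1 − t) log r_s + t log r_t) · (cos((1 − t)θ_s + tθ_t), sin((1 − t)θ_s + tθ_t)). Then ∫₀¹ ‖γ'(t)‖ / ‖γ(t)‖ dt = √( (θ_t − θ_s)² + (log r_t − log r_s)² ). -/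
/-!
In complex coordinates the spiral is `exp ∘ z` for the affine path `z` from `log r_s + i θ_s`
to `log r_t + i θ_t`. Hence `γ' = (z_t - z_s) γ`, the integrand `‖γ'‖ / ‖γ‖` is the constant
`‖z_t - z_s‖`, and the identification `ℂ ≃ ℝ²` is an isometry.
-/

open Real Set

theorem LinearIsometryEquiv.norm_deriv_comp {E F : Type*} [NormedAddCommGroup E]
    [NormedSpace ℝ E] [NormedAddCommGroup F] [NormedSpace ℝ F] (L : E ≃ₗᵢ[ℝ] F) (f : ℝ → E)
    (t : ℝ) : ‖deriv (L ∘ f) t‖ = ‖deriv f t‖ := by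
  rw [deriv, deriv, L.comp_fderiv, ContinuousLinearMap.comp_apply]
  exact L.norm_map _

namespace Complex

noncomputable def logSpiral (zs zt : ℂ) (t : ℝ) : ℂ := exp ((1 - t) * zs + t * zt)

theorem logSpiral_ne_zero (zs zt : ℂ) (t : ℝ) : logSpiral zs zt t ≠ 0 := exp_ne_zero _

theorem hasDerivAt_logSpiral (zs zt : ℂ) (t : ℝ) :
    HasDerivAt (logSpiral zs zt) (logSpiral zs zt t * (zt - zs)) t := by
  have h : HasDerivAt (fun s : ℝ => (1 - (s : ℂ)) * zs + s * zt) (zt - zs) t := by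
    simpa [neg_add_eq_sub] using (((hasDerivAt_id (t : ℂ)).const_sub 1).mul_const zs).add
      ((hasDerivAt_id (t : ℂ)).mul_const zt) |>.comp_ofReal
  exact h.cexp

theorem norm_deriv_logSpiral_div_norm (zs zt : ℂ) (t : ℝ) :
    ‖deriv (logSpiral zs zt) t‖ / ‖logSpiral zs zt t‖ = ‖zt - zs‖ := by
  rw [(hasDerivAt_logSpiral zs zt t).deriv, norm_mul,
    mul_div_cancel_left₀ _ (norm_ne_zero_iff.mpr (logSpiral_ne_zero zs zt t))]

theorem integral_norm_deriv_logSpiral_div_norm (zs zt : ℂ) :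
    ∫ t in (0:ℝ)..1, ‖deriv (logSpiral zs zt) t‖ / ‖logSpiral zs zt t‖ = ‖zt - zs‖ := by
  simp [norm_deriv_logSpiral_div_norm]

theorem orthonormalBasisOneI_repr_logSpiral (zs zt : ℂ) (t : ℝ) :
    orthonormalBasisOneI.repr (logSpiral zs zt t) =
      ![Real.exp ((1 - t) * zs.re + t * zt.re) * Real.cos ((1 - t) * zs.im + t * zt.im),
        Real.exp ((1 - t) * zs.re + t * zt.re) * Real.sin ((1 - t) * zs.im + t * zt.im)] := by
  simp [logSpiral, exp_re, exp_im]

end Complex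

theorem log_spiral_cost_general (rs rt θs θt : ℝ)
    (γ : ℝ → EuclideanSpace ℝ (Fin 2))
    (hγ : ∀ t, γ t = ![Real.exp ((1 - t) * Real.log rs + t * Real.log rt) *
          Real.cos ((1 - t) * θs + t * θt),
        Real.exp ((1 - t) * Real.log rs + t * Real.log rt) *
          Real.sin ((1 - t) * θs + t * θt)]) :
    ∫ t in (0:ℝ)..1, ‖deriv γ t‖ / ‖γ t‖ =
      Real.sqrt ((θt - θs) ^ 2 + (Real.log rt - Real.log rs) ^ 2) := by
  set zs : ℂ := ⟨Real.log rs, θs⟩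
  set zt : ℂ := ⟨Real.log rt, θt⟩
  have hγ_spiral : γ = Complex.orthonormalBasisOneI.repr ∘ Complex.logSpiral zs zt := by
    funext t
    apply WithLp.ofLp_injective
    rw [hγ, Function.comp_apply, Complex.orthonormalBasisOneI_repr_logSpiral]
  simp only [hγ_spiral, LinearIsometryEquiv.norm_deriv_comp, Function.comp_apply,
    LinearIsometryEquiv.norm_map]
  rw [Complex.integral_norm_deriv_logSpiral_div_norm, Complex.norm_eq_sqrt_sq_add_sq, add_comm]
  rfl

/-- Upper-bound half of property (P1), equation (2): the logarithmic spiral from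
`r_s e^{iθ_s}` to `r_t e^{iθ_t}` has cost `√((θ_t − θ_s)² + (log r_t − log r_s)²)`
with respect to the point obstacle `0`. -/
theorem log_spiral_cost (rs rt θs θt : ℝ) (hrs : 0 < rs) (hrt : 0 < rt)
    (γ : ℝ → EuclideanSpace ℝ (Fin 2))
    (hγ : ∀ t, γ t = ![Real.exp ((1 - t) * Real.log rs + t * Real.log rt) *
          Real.cos ((1 - t) * θs + t * θt),
        Real.exp ((1 - t) * Real.log rs + t * Real.log rt) *
          Real.sin ((1 - t) * θs + t * θt)]) :
    ∫ t in (0:ℝ)..1, ‖deriv γ t‖ / ‖γ t‖ =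
      Real.sqrt ((θt - θs) ^ 2 + (Real.log rt - Real.log rs) ^ 2) :=
  log_spiral_cost_general rs rt θs θt γ hγ
end

section
/- Let r : [0,1] → ℝ and θ : [0,1] → ℝ be continuously differentiable with r(t) > 0 for all t ∈ [0,1], and define γ : [0,1] → ℝ² by γ(t) = (r(t)·cos θ(t), r(t)·sin θ(t)). Then ∫₀¹ ‖γ'(t)‖ / ‖γ(t)‖ dt ≥ √( (θ(1) − θ(0))² + (log r(1) − log r(0))² ). -/
/-!
For `γ = r e^{iθ}` one has `γ' / γ = (log r)' + i θ'`, so the log-polar lift `t ↦ (θ t, log (r t))`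
moves with speed `‖γ'‖ / ‖γ‖`. The cost of `γ` is therefore the length of the lift, which is at
least the distance between the lift's endpoints; that distance is the cost of the logarithmic
spiral, whose lift is a straight segment.
-/

open Real Set MeasureTheory

lemma EuclideanSpace.norm_vec2 (x y : ℝ) : ‖!₂[x, y]‖ = √(x ^ 2 + y ^ 2) := by
  simp [EuclideanSpace.norm_eq, Fin.sum_univ_two]

lemma EuclideanSpace.vec2_sub_vec2 (a b c d : ℝ) : !₂[a, b] - !₂[c, d] = !₂[a - c, b - d] := by
  rw [← WithLp.toLp_sub, Matrix.cons_sub_cons, Matrix.cons_sub_cons, Matrix.empty_sub_empty]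

lemma ContinuousOn.euclidean_vec2 {α : Type*} [TopologicalSpace α] {f g : α → ℝ} {s : Set α}
    (hf : ContinuousOn f s) (hg : ContinuousOn g s) :
    ContinuousOn (fun u => !₂[f u, g u]) s :=
  (PiLp.continuous_toLp 2 _).comp_continuousOn
    (hf.matrixVecCons (hg.matrixVecCons continuousOn_const))

lemma HasDerivWithinAt.euclidean_vec2 {f g : ℝ → ℝ} {f' g' t : ℝ} {s : Set ℝ}
    (hf : HasDerivWithinAt f f' s t) (hg : HasDerivWithinAt g g' s t) :
    HasDerivWithinAt (fun u => !₂[f u, g u]) !₂[f', g'] s t := by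
  have hpi : HasDerivWithinAt (fun u => ![f u, g u]) ![f', g'] s t :=
    hasDerivWithinAt_pi.2 fun i => by fin_cases i <;> assumption
  exact (PiLp.continuousLinearEquiv 2 ℝ _).symm.hasFDerivAt.comp_hasDerivWithinAt t hpi

lemma HasDerivWithinAt.polar {r θ : ℝ → ℝ} {r' θ' t : ℝ} {s : Set ℝ}
    (hr : HasDerivWithinAt r r' s t) (hθ : HasDerivWithinAt θ θ' s t) :
    HasDerivWithinAt (fun u => !₂[r u * Real.cos (θ u), r u * Real.sin (θ u)])
      !₂[r' * Real.cos (θ t) - r t * θ' * Real.sin (θ t),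
        r' * Real.sin (θ t) + r t * θ' * Real.cos (θ t)] s t :=
  ((hr.mul hθ.cos).congr_deriv (by ring)).euclidean_vec2 ((hr.mul hθ.sin).congr_deriv (by ring))

lemma norm_polar_deriv_div_norm_polar {ρ ρ' φ φ' : ℝ} (hρ : 0 < ρ) :
    ‖!₂[ρ' * cos φ - ρ * φ' * sin φ, ρ' * sin φ + ρ * φ' * cos φ]‖ / ‖!₂[ρ * cos φ, ρ * sin φ]‖ =
      ‖!₂[φ', ρ' / ρ]‖ := by
  simp only [EuclideanSpace.norm_vec2]
  rw [← Real.sqrt_div' _ (by positivity)]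
  congr 1
  field_simp
  ring

lemma norm_sub_le_integral_of_hasDerivWithinAt_Icc {E : Type*} [NormedAddCommGroup E]
    [NormedSpace ℝ E] {f f' : ℝ → E} {B : ℝ → ℝ} {a b : ℝ} (hab : a ≤ b)
    (hf : ∀ t ∈ Icc a b, HasDerivWithinAt f (f' t) (Icc a b) t)
    (hfB : ∀ t ∈ Ioo a b, ‖f' t‖ ≤ B t) (hB : IntervalIntegrable B volume a b) :
    ‖f b - f a‖ ≤ ∫ t in a..b, B t := by
  have hf_at t (ht : t ∈ Ioo a b) : HasDerivAt f (f' t) t :=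
    (hf t (Ioo_subset_Icc_self ht)).hasDerivAt (Icc_mem_nhds ht.1 ht.2)
  refine norm_sub_le_integral_of_norm_deriv_le_of_le hab
    (fun t ht => (hf t ht).continuousWithinAt)
    (fun t ht => (hf_at t ht).differentiableAt.differentiableWithinAt)
    (.of_forall fun t ht => ?_) hB
  rw [(hf_at t ht).deriv]
  exact hfB t ht

/-- Lower-bound half of property (P1), equation (2): no path in polar form between
two points has cost less than that of the logarithmic spiral joining them. -/
theorem polar_cost_ge_spiral_cost
    (r θ : ℝ → ℝ)
    (hr : ContDiffOn ℝ 1 r (Icc 0 1)) (hθ : ContDiffOn ℝ 1 θ (Icc 0 1))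
    (hrpos : ∀ t ∈ Icc (0:ℝ) 1, 0 < r t)
    (γ : ℝ → EuclideanSpace ℝ (Fin 2))
    (hγ : ∀ t, γ t = ![r t * Real.cos (θ t), r t * Real.sin (θ t)]) :
    Real.sqrt ((θ 1 - θ 0) ^ 2 + (Real.log (r 1) - Real.log (r 0)) ^ 2) ≤
      ∫ t in (0:ℝ)..1, ‖derivWithin γ (Icc 0 1) t‖ / ‖γ t‖ := by
  have hγ_eq : γ = fun t => !₂[r t * cos (θ t), r t * sin (θ t)] :=
    funext fun t => WithLp.ofLp_injective 2 (hγ t)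
  set D := Icc (0:ℝ) 1
  have hD : UniqueDiffOn ℝ D := uniqueDiffOn_Icc one_pos
  have hr' t (ht : t ∈ D) : HasDerivWithinAt r (derivWithin r D t) D t :=
    (hr.differentiableOn one_ne_zero t ht).hasDerivWithinAt
  have hθ' t (ht : t ∈ D) : HasDerivWithinAt θ (derivWithin θ D t) D t :=
    (hθ.differentiableOn one_ne_zero t ht).hasDerivWithinAt
  set w := fun t => !₂[derivWithin θ D t, derivWithin r D t / r t]
  have hlift t (ht : t ∈ D) : HasDerivWithinAt (fun u => !₂[θ u, log (r u)]) (w t) D t :=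
    (hθ' t ht).euclidean_vec2 ((hr' t ht).log (hrpos t ht).ne')
  have hcost : EqOn (fun t => ‖derivWithin γ D t‖ / ‖γ t‖) (‖w ·‖) D := fun t ht => by
    simp only [hγ_eq, ((hr' t ht).polar (hθ' t ht)).derivWithin (hD t ht)]
    exact norm_polar_deriv_div_norm_polar (hrpos t ht)
  have hw : ContinuousOn w D :=
    (hθ.continuousOn_derivWithin hD le_rfl).euclidean_vec2
      ((hr.continuousOn_derivWithin hD le_rfl).div hr.continuousOn fun t ht => (hrpos t ht).ne')
  calc √((θ 1 - θ 0) ^ 2 + (log (r 1) - log (r 0)) ^ 2)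
      = ‖!₂[θ 1, log (r 1)] - !₂[θ 0, log (r 0)]‖ := by
        rw [EuclideanSpace.vec2_sub_vec2, EuclideanSpace.norm_vec2]
    _ ≤ ∫ t in (0:ℝ)..1, ‖derivWithin γ D t‖ / ‖γ t‖ :=
      norm_sub_le_integral_of_hasDerivWithinAt_Icc zero_le_one hlift
        (fun t ht => (hcost (Ioo_subset_Icc_self ht)).ge)
        ((hw.norm.congr hcost).intervalIntegrable_of_Icc zero_le_one)
end

section
/- Let r > 0 and 0 < θ_s ≤ θ_t < π. Define the circular arc γ : [0,1] → ℝ² by γ(t) = r · (cos((1 − t)θ_s + tθ_t), sin((1 − t)θ_s + tθ_t)), so that the second coordinate γ₂(t) > 0 for all t (γ₂(x) is the clearance of γ(t) from the line obstacle ℝ × {0}). Then ∫₀¹ ‖γ'(t)‖ / γ₂(t) dt = log( tan(θ_t / 2) ) − log( tan(θ_s / 2) ). -/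
/-!
The arc has constant speed `r (θt - θs)` and clearance `r sin θ`, so after the substitution
`θ = (1 - t) θs + t θt` the cost is `∫_{θs}^{θt} dθ / sin θ`, and `log tan (θ / 2)` is an
antiderivative of `1 / sin θ` since `sin θ = 2 sin (θ / 2) cos (θ / 2)`.
-/

open Real Set

theorem hasDerivAt_log_tan_half {x : ℝ} (hx : sin x ≠ 0) :
    HasDerivAt (fun y => log (tan (y / 2))) (sin x)⁻¹ x := by
  have hsin_double : sin x = 2 * sin (x / 2) * cos (x / 2) := by
    rw [← sin_two_mul]; ring_nf
  have hcos : cos (x / 2) ≠ 0 := fun h => hx (by simp [hsin_double, h])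
  have hsin : sin (x / 2) ≠ 0 := fun h => hx (by simp [hsin_double, h])
  have htan : tan (x / 2) ≠ 0 := by rw [tan_eq_sin_div_cos]; exact div_ne_zero hsin hcos
  have hhalf : HasDerivAt (fun y : ℝ => y / 2) (1 / 2) x := (hasDerivAt_id x).div_const 2
  refine ((hasDerivAt_log htan).comp x ((hasDerivAt_tan hcos).comp x hhalf)).congr_deriv ?_
  rw [hsin_double, tan_eq_sin_div_cos]
  field_simp

theorem integral_inv_sin {a b : ℝ} (h : ∀ x ∈ uIcc a b, sin x ≠ 0) :
    ∫ x in a..b, (sin x)⁻¹ = log (tan (b / 2)) - log (tan (a / 2)) :=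
  intervalIntegral.integral_eq_sub_of_hasDerivAt (fun x hx => hasDerivAt_log_tan_half (h x hx))
    (continuous_sin.continuousOn.inv₀ h).intervalIntegrable

theorem hasDerivAt_polar_curve (r : ℝ) {φ : ℝ → ℝ} {φ' t : ℝ} (hφ : HasDerivAt φ φ' t) :
    HasDerivAt (fun s => WithLp.toLp 2 ![r * cos (φ s), r * sin (φ s)] :
        ℝ → EuclideanSpace ℝ (Fin 2))
      (WithLp.toLp 2 ![-(r * sin (φ t) * φ'), r * cos (φ t) * φ']) t := by
  have hcoord : HasDerivAt (fun s => ![r * cos (φ s), r * sin (φ s)])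
      ![-(r * sin (φ t) * φ'), r * cos (φ t) * φ'] t := by
    rw [hasDerivAt_pi, Fin.forall_fin_two]
    simp only [Matrix.cons_val_zero, Matrix.cons_val_one]
    exact ⟨(hφ.cos.const_mul r).congr_deriv (by ring), (hφ.sin.const_mul r).congr_deriv (by ring)⟩
  exact (EuclideanSpace.equiv (Fin 2) ℝ).symm.toContinuousLinearMap.hasFDerivAt.comp_hasDerivAt t
    hcoord

theorem norm_deriv_polar_curve (r : ℝ) {φ : ℝ → ℝ} {φ' t : ℝ} (hφ : HasDerivAt φ φ' t) :
    ‖deriv (fun s => WithLp.toLp 2 ![r * cos (φ s), r * sin (φ s)] :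
        ℝ → EuclideanSpace ℝ (Fin 2)) t‖ = |r * φ'| := by
  rw [(hasDerivAt_polar_curve r hφ).deriv, EuclideanSpace.norm_eq, Fin.sum_univ_two,
    ← sqrt_sq_eq_abs]
  congr 1
  simp only [Matrix.cons_val_zero, Matrix.cons_val_one, Real.norm_eq_abs, sq_abs]
  linear_combination (r * φ') ^ 2 * sin_sq_add_cos_sq (φ t)

theorem arc_cost_line_obstacle_general (r θs θt : ℝ) (hr : 0 < r)
    (h1 : 0 < θs) (h2 : θs ≤ θt) (h3 : θt < π)
    (γ : ℝ → EuclideanSpace ℝ (Fin 2))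
    (hγ : ∀ t, γ t = ![r * Real.cos ((1 - t) * θs + t * θt),
        r * Real.sin ((1 - t) * θs + t * θt)]) :
    ∫ t in (0:ℝ)..1, ‖deriv γ t‖ / γ t 1 =
      Real.log (Real.tan (θt / 2)) - Real.log (Real.tan (θs / 2)) := by
  have hangle : ∀ t, (1 - t) * θs + t * θt = (θt - θs) * t + θs := fun t => by ring
  have hγ_polar : γ = fun t => WithLp.toLp 2
      ![r * cos ((θt - θs) * t + θs), r * sin ((θt - θs) * t + θs)] := by
    funext t
    apply WithLp.ofLp_injective 2
    simpa only [hangle] using hγ t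
  have hspeed : ∀ t, ‖deriv γ t‖ = r * (θt - θs) := fun t => by
    rw [hγ_polar, norm_deriv_polar_curve r (((hasDerivAt_id' t).const_mul _).add_const θs),
      mul_one, abs_of_nonneg (by nlinarith)]
  have hintegrand : ∀ t, ‖deriv γ t‖ / γ t 1 = (θt - θs) * (sin ((θt - θs) * t + θs))⁻¹ := by
    intro t
    rw [hspeed, hγ_polar]
    simp only [Matrix.cons_val_one, Matrix.cons_val_zero]
    field_simp
  calc ∫ t in (0:ℝ)..1, ‖deriv γ t‖ / γ t 1
      = (θt - θs) * ∫ t in (0:ℝ)..1, (sin ((θt - θs) * t + θs))⁻¹ := by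
        simp only [hintegrand, intervalIntegral.integral_const_mul]
    _ = ∫ x in θs..θt, (sin x)⁻¹ := by
        rw [intervalIntegral.mul_integral_comp_mul_add (f := fun x => (sin x)⁻¹)]; ring_nf
    _ = _ := integral_inv_sin fun x hx => by
        rw [uIcc_of_le h2] at hx
        exact (sin_pos_of_pos_of_lt_pi (h1.trans_le hx.1) (hx.2.trans_lt h3)).ne'

/-- Property (P2), equation (3): a circular arc of radius `r` centered at a point of
the line obstacle `ℝ × {0}`, spanning angles `θ_s` to `θ_t`, has cost
`log tan(θ_t/2) − log tan(θ_s/2)`. -/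
theorem arc_cost_line_obstacle (r θs θt : ℝ) (hr : 0 < r)
    (h1 : 0 < θs) (h2 : θs ≤ θt) (h3 : θt < π)
    (γ : ℝ → EuclideanSpace ℝ (Fin 2))
    (hγ : ∀ t, γ t = ![r * Real.cos ((1 - t) * θs + t * θt),
        r * Real.sin ((1 - t) * θs + t * θt)])
    (hpos : ∀ t ∈ Icc (0:ℝ) 1, 0 < γ t 1) :
    ∫ t in (0:ℝ)..1, ‖deriv γ t‖ / γ t 1 =
      Real.log (Real.tan (θt / 2)) - Real.log (Real.tan (θs / 2)) :=
  arc_cost_line_obstacle_general r θs θt hr h1 h2 h3 γ hγ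
end

section
/- Let γ : [0,1] → ℂ be a continuously differentiable path with Im(γ(t)) > 0 for all t ∈ [0,1], and let p and q be points of the upper half-plane (with its standard hyperbolic metric) whose underlying complex numbers are γ(0) and γ(1) respectively. Then ∫₀¹ ‖γ'(t)‖ / Im(γ(t)) dt ≥ dist(p, q), the hyperbolic distance between p and q. -/
/-!
By the chord bound `dist z w ≤ ‖z - w‖ / √(Im z * Im w)` in `ℍ`, the hyperbolic speed of `γ`
at `t`, measured from the right, is at most `‖γ' t‖ / Im (γ t)`. A path whose right metric speed
is bounded by a continuous `v` has endpoints at distance at most `∫ v`: compare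
`t ↦ dist (γ 0) (γ t)` with `t ↦ ∫₀ᵗ v` by the fencing argument of the mean value theorem.
-/

open Real Set Filter Topology UpperHalfPlane

theorem dist_le_integral_of_eventually_dist_div_sub_lt {X : Type*} [PseudoMetricSpace X]
    {f : ℝ → X} {v : ℝ → ℝ} {a b : ℝ} (hab : a ≤ b)
    (hf : ContinuousOn f (Icc a b)) (hv : ContinuousOn v (Icc a b))
    (hspeed : ∀ x ∈ Ico a b, ∀ r, v x < r → ∀ᶠ z in 𝓝[>] x, dist (f x) (f z) / (z - x) < r) :
    dist (f a) (f b) ≤ ∫ t in a..b, v t := by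
  set w := IccExtend hab ((Icc a b).domRestrict v)
  have hw : Continuous w := hv.domRestrict.Icc_extend'
  have hwv : ∀ t ∈ Icc a b, w t = v t := fun t ht ↦ IccExtend_of_mem hab _ ht
  have hprim : ∀ x, HasDerivAt (fun u ↦ ∫ t in a..u, w t) (w x) x :=
    fun x ↦ (hw.integral_hasStrictDerivAt a x).hasDerivAt
  have hfence : ∀ ⦃x⦄, x ∈ Icc a b → dist (f a) (f x) ≤ ∫ t in a..x, w t := by
    refine image_le_of_liminf_slope_right_le_deriv_boundary
      ((continuous_const.dist continuous_id).comp_continuousOn hf) (by simp)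
      (fun x _ ↦ (hprim x).continuousAt.continuousWithinAt)
      (fun x _ ↦ (hprim x).hasDerivWithinAt) fun x hx r hr ↦ ?_
    rw [hwv x (Ico_subset_Icc_self hx)] at hr
    refine Eventually.frequently ?_
    filter_upwards [hspeed x hx r hr, self_mem_nhdsWithin] with z hz (hxz : x < z)
    refine lt_of_le_of_lt ?_ hz
    rw [slope_def_field]
    gcongr
    change dist (f a) (f z) - dist (f a) (f x) ≤ _
    linarith [dist_triangle (f a) (f x) (f z)]
  calc dist (f a) (f b) ≤ ∫ t in a..b, w t := hfence (right_mem_Icc.2 hab)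
    _ = ∫ t in a..b, v t :=
      intervalIntegral.integral_congr fun t ht ↦ hwv t (uIcc_of_le hab ▸ ht)

theorem UpperHalfPlane.eventually_dist_div_sub_lt {c : ℝ → ℍ} {d : ℂ} {x r : ℝ}
    (hc : HasDerivWithinAt (fun t ↦ (c t : ℂ)) d (Ioi x) x) (hr : ‖d‖ / (c x).im < r) :
    ∀ᶠ z in 𝓝[>] x, dist (c x) (c z) / (z - x) < r := by
  have hslope : Tendsto (slope (fun t ↦ (c t : ℂ)) x) (𝓝[>] x) (𝓝 d) :=
    (hasDerivWithinAt_iff_tendsto_slope' (lt_irrefl x)).1 hc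
  have him : Tendsto (fun z ↦ (c z).im) (𝓝[>] x) (𝓝 (c x).im) :=
    (Complex.continuous_im.tendsto _).comp hc.continuousWithinAt
  have hbound : Tendsto (fun z ↦ ‖slope (fun t ↦ (c t : ℂ)) x z‖ / √((c x).im * (c z).im))
      (𝓝[>] x) (𝓝 (‖d‖ / (c x).im)) := by
    have hsqrt := (him.const_mul (c x).im).sqrt
    rw [Real.sqrt_mul_self (c x).im_pos.le] at hsqrt
    exact hslope.norm.div hsqrt (c x).im_pos.ne'
  filter_upwards [hbound.eventually (gt_mem_nhds hr), self_mem_nhdsWithin] with z hz (hxz : x < z)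
  calc dist (c x) (c z) / (z - x)
      ≤ dist (c x : ℂ) (c z) / √((c x).im * (c z).im) / (z - x) := by
        gcongr
        exact dist_le_dist_coe_div_sqrt _ _
    _ = ‖slope (fun t ↦ (c t : ℂ)) x z‖ / √((c x).im * (c z).im) := by
        rw [slope_def_module, norm_smul, norm_inv, Real.norm_eq_abs, abs_of_pos (sub_pos.2 hxz),
          dist_comm, dist_eq_norm, div_right_comm, inv_mul_eq_div]
    _ < r := hz

/-- Optimality claim of property (P2): the cost of a path in the open upper
half-plane is at least the hyperbolic distance between its endpoints. -/
theorem cost_ge_hyperbolic_dist (γ : ℝ → ℂ)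
    (hγ : ContDiffOn ℝ 1 γ (Icc 0 1))
    (him : ∀ t ∈ Icc (0:ℝ) 1, 0 < (γ t).im)
    (p q : UpperHalfPlane) (hp : (p : ℂ) = γ 0) (hq : (q : ℂ) = γ 1) :
    dist p q ≤ ∫ t in (0:ℝ)..1, ‖derivWithin γ (Icc 0 1) t‖ / (γ t).im := by
  set c : ℝ → ℍ := IccExtend zero_le_one fun t ↦ mk (γ t) (him t t.2)
  have hcγ : ∀ t ∈ Icc (0:ℝ) 1, (c t : ℂ) = γ t := fun t ht ↦ by
    simp [c, IccExtend_of_mem _ _ ht]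
  have hc0 : c 0 = p := UpperHalfPlane.ext (by rw [hcγ 0 (left_mem_Icc.2 zero_le_one), hp])
  have hc1 : c 1 = q := UpperHalfPlane.ext (by rw [hcγ 1 (right_mem_Icc.2 zero_le_one), hq])
  have hcont : ContinuousOn c (Icc 0 1) :=
    (hγ.continuousOn.domRestrict.upperHalfPlaneMk _).Icc_extend'.continuousOn
  have hspeed : ContinuousOn (fun t ↦ ‖derivWithin γ (Icc 0 1) t‖ / (γ t).im) (Icc 0 1) :=
    ((hγ.continuousOn_derivWithin (uniqueDiffOn_Icc one_pos) le_rfl).norm).div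
      (Complex.continuous_im.comp_continuousOn hγ.continuousOn) fun t ht ↦ (him t ht).ne'
  rw [← hc0, ← hc1]
  refine dist_le_integral_of_eventually_dist_div_sub_lt zero_le_one hcont hspeed
    fun x hx r hr ↦ ?_
  have hx' : x ∈ Icc (0:ℝ) 1 := Ico_subset_Icc_self hx
  have hderiv : HasDerivWithinAt (fun t ↦ (c t : ℂ)) (derivWithin γ (Icc 0 1) x) (Ioi x) x :=
    ((hγ.differentiableOn one_ne_zero x hx').hasDerivWithinAt.congr hcγ
      (hcγ x hx')).mono_of_mem_nhdsWithin <|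
      mem_of_superset (Ioc_mem_nhdsGT hx.2) fun t ht ↦ ⟨hx.1.trans ht.1.le, ht.2⟩
  exact eventually_dist_div_sub_lt hderiv (by rwa [← coe_im, hcγ x hx'])
end
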